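/- There exists an H-colored multigraph G such that L_2^H(G) is Hamiltonian but G has no closed Euler dynamic H-trail. -/

import Mathlib

namespace DynH

/-- A multigraph without loops: each edge `e` has two distinct endpoints
`G.fst e` and `G.snd e`. Parallel edges are allowed since `E` is an abstract
edge type. -/
structure Multigraph (V E : Type) where
  fst : E → V
  snd : E → V
  loopless : ∀ e, fst e ≠ snd e

variable {V E C : Type}

namespace Multigraph

/-- The vertex `x` is incident with the edge `e`. -/
def inc (G : Multigraph V E) (x : V) (e : E) : Prop := G.fst e = x ∨ G.snd e = x

/-- The edge `e` joins the vertices `x` and `y`. -/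
def joins (G : Multigraph V E) (e : E) (x y : V) : Prop :=
  (G.fst e = x ∧ G.snd e = y) ∨ (G.fst e = y ∧ G.snd e = x)

/-- `e` and `g` have the same pair of end vertices. -/
def parallel (G : Multigraph V E) (e g : E) : Prop :=
  (G.fst e = G.fst g ∧ G.snd e = G.snd g) ∨ (G.fst e = G.snd g ∧ G.snd e = G.fst g)

end Multigraph

instance Multigraph.decInc (G : Multigraph V E) [DecidableEq V] :
    ∀ (x : V) (e : E), Decidable (G.inc x e) := fun x e => by
  unfold Multigraph.inc; infer_instance

/-- The underlying simple graph of a multigraph (used to express connectedness). -/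
def SupportGraph (G : Multigraph V E) : SimpleGraph V where
  Adj x y := x ≠ y ∧ ∃ e, G.joins e x y
  symm := by
    constructor
    rintro x y ⟨hxy, e, he⟩
    exact ⟨hxy.symm, e, he.symm⟩
  loopless := ⟨fun x h => h.1 rfl⟩

/-- Vertices of `L_2^H(G)`: the incidences `f(x,e)`. -/
def L2V (G : Multigraph V E) : Type := {p : V × E // G.inc p.1 p.2}

instance (G : Multigraph V E) [DecidableEq V] [DecidableEq E] : DecidableEq (L2V G) := by
  unfold L2V; infer_instance

instance (G : Multigraph V E) [Fintype V] [Fintype E] [DecidableEq V] : Fintype (L2V G) := by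
  unfold L2V; infer_instance

/-- Adjacency of `L_2^H(G)` (one-sided; it is symmetrized below, which changes
nothing when `adjH` is symmetric). -/
def L2Adj (G : Multigraph V E) (adjH : C → C → Prop) (c : E → C) (p q : L2V G) : Prop :=
  (p.val.2 = q.val.2 ∧ p.val.1 ≠ q.val.1)
  ∨ (p.val.1 = q.val.1 ∧ p.val.2 ≠ q.val.2 ∧ adjH (c p.val.2) (c q.val.2))
  ∨ (p.val.1 ≠ q.val.1 ∧ p.val.2 ≠ q.val.2 ∧ G.parallel p.val.2 q.val.2)

/-- The auxiliary simple graph `L_2^H(G)`. -/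
def L2Graph (G : Multigraph V E) (adjH : C → C → Prop) (c : E → C) :
    SimpleGraph (L2V G) where
  Adj p q := L2Adj G adjH c p q ∨ L2Adj G adjH c q p
  symm := ⟨fun _ _ h => Or.symm h⟩
  loopless := ⟨fun p h => by
    rcases h with h | h <;> rcases h with ⟨_, h⟩ | ⟨_, h, _⟩ | ⟨h, _⟩ <;> exact h rfl⟩

/-- The joint matching `M_J = { f(x,e)f(y,e) : e = xy ∈ E(G) }` of `L_2^H(G)`. -/
def MJ (G : Multigraph V E) : Set (Sym2 (L2V G)) :=
  {s | ∃ p q : L2V G, s = s(p, q) ∧ p ≠ q ∧ p.val.2 = q.val.2}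

/-- A matching of a simple graph, given as a set of edges. -/
def IsMatchingSet {α : Type} (Gr : SimpleGraph α) (M : Set (Sym2 α)) : Prop :=
  M ⊆ Gr.edgeSet ∧ ∀ v : α, ∀ s ∈ M, ∀ t ∈ M, v ∈ s → v ∈ t → s = t

/-- A perfect matching of a simple graph, given as a set of edges. -/
def IsPerfectMatchingSet {α : Type} (Gr : SimpleGraph α) (M : Set (Sym2 α)) : Prop :=
  IsMatchingSet Gr M ∧ ∀ v : α, ∃ s ∈ M, v ∈ s

/-- Every entry `(x, y, e)` of the list records a traversal of an edge `e`
joining `x` and `y` (from `x` to `y`). -/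
def GoodEntries (G : Multigraph V E) (L : List (V × V × E)) : Prop :=
  ∀ t ∈ L, G.joins t.2.2 t.1 t.2.1

/-- The list of edges underlying a list of edge traversals. -/
def edgesOf (L : List (V × V × E)) : List E := L.map fun t => t.2.2

/-- Allowed consecutive pair in a dynamic `H`-trail: either a transition through a
common vertex with colors adjacent in `H`, or a lane change between parallel edges. -/
def DynStep (G : Multigraph V E) (adjH : C → C → Prop) (c : E → C)
    (a b : V × V × E) : Prop :=
  (a.2.1 = b.1 ∧ adjH (c a.2.2) (c b.2.2))
  ∨ (a.1 = b.1 ∧ a.2.1 = b.2.1 ∧ a.2.2 ≠ b.2.2 ∧ G.parallel a.2.2 b.2.2)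

/-- Allowed consecutive pair in an `H`-trail: transition through a common vertex
with colors adjacent in `H`. -/
def HStep (adjH : C → C → Prop) (c : E → C) (a b : V × V × E) : Prop :=
  a.2.1 = b.1 ∧ adjH (c a.2.2) (c b.2.2)

/-- A closed dynamic `H`-trail, encoded as the cyclic list of its edge traversals. -/
def IsClosedDynHTrail (G : Multigraph V E) (adjH : C → C → Prop) (c : E → C)
    (L : List (V × V × E)) : Prop :=
  L ≠ [] ∧ (edgesOf L).Nodup ∧ GoodEntries G L ∧
    ∀ p ∈ L.zip (L.rotate 1), DynStep G adjH c p.1 p.2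

/-- A closed `H`-trail, encoded as the cyclic list of its edge traversals. -/
def IsClosedHTrail (G : Multigraph V E) (adjH : C → C → Prop) (c : E → C)
    (L : List (V × V × E)) : Prop :=
  L ≠ [] ∧ (edgesOf L).Nodup ∧ GoodEntries G L ∧
    ∀ p ∈ L.zip (L.rotate 1), HStep adjH c p.1 p.2

/-- A (non-closed) dynamic `H`-trail. -/
def IsDynHTrail (G : Multigraph V E) (adjH : C → C → Prop) (c : E → C)
    (L : List (V × V × E)) : Prop :=
  L ≠ [] ∧ (edgesOf L).Nodup ∧ GoodEntries G L ∧
    ∀ p ∈ L.zip L.tail, DynStep G adjH c p.1 p.2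

/-- A (non-closed) `H`-trail. -/
def IsHTrail (G : Multigraph V E) (adjH : C → C → Prop) (c : E → C)
    (L : List (V × V × E)) : Prop :=
  L ≠ [] ∧ (edgesOf L).Nodup ∧ GoodEntries G L ∧
    ∀ p ∈ L.zip L.tail, HStep adjH c p.1 p.2

/-- A cycle in `L_2^H(G)` (as a cyclic list of distinct vertices) which alternates
between edges of the joint matching `M_J` (at even positions) and edges of
`E(L_2^H(G)) \ M_J` (at odd positions). -/
def IsAltCycle (G : Multigraph V E) (adjH : C → C → Prop) (c : E → C)
    (vs : List (L2V G)) : Prop :=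
  vs ≠ [] ∧ vs.Nodup ∧ 3 ≤ vs.length ∧
    ∀ k : Fin vs.length,
      (L2Graph G adjH c).Adj (vs.get k)
        (vs.get ⟨(k.val + 1) % vs.length, Nat.mod_lt _ (Nat.lt_of_le_of_lt (Nat.zero_le _) k.isLt)⟩) ∧
      (s(vs.get k,
          vs.get ⟨(k.val + 1) % vs.length,
            Nat.mod_lt _ (Nat.lt_of_le_of_lt (Nat.zero_le _) k.isLt)⟩) ∈ MJ G ↔ k.val % 2 = 0)

/-- The simple graph `G_x` on the edges of `G` incident with `x`; two such edges are
adjacent iff their colors are adjacent in `H`. (Symmetrized; this changes nothing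
when `adjH` is symmetric.) -/
def GxGraph (G : Multigraph V E) (adjH : C → C → Prop) (c : E → C) (x : V) :
    SimpleGraph {e : E // G.inc x e} where
  Adj a b := a ≠ b ∧ (adjH (c a.val) (c b.val) ∨ adjH (c b.val) (c a.val))
  symm := by constructor; rintro a b ⟨hab, h⟩; exact ⟨hab.symm, h.symm⟩
  loopless := ⟨fun a h => h.1 rfl⟩

end DynH

/-!
The example is the triangle `u v w` with the side `uv` doubled, one copy of `uv` blue and the
other three edges red, and `H` two looped colours with no edge between them. The blue edge has
no `H`-compatible neighbour, so in a closed dynamic `H`-trail it can only be entered and left by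
a lane change with the red copy of `uv`; both of its cyclic neighbours would then be that red
edge, which is impossible in a trail with at least three edges, in particular in an Euler trail.
On the other hand `L_2^H(G)` has eight vertices and an explicit Hamiltonian cycle.
-/

namespace List

variable {α β : Type*}

theorem forall_mem_zip_rotate_one_rotate {R : α → α → Prop} {l : List α}
    (hR : ∀ p ∈ l.zip (l.rotate 1), R p.1 p.2) (m : ℕ) :
    ∀ p ∈ (l.rotate m).zip ((l.rotate m).rotate 1), R p.1 p.2 := by
  intro p hp
  rw [rotate_rotate, add_comm, ← rotate_rotate, zip,
    ← zipWith_rotate_distrib _ _ _ _ (length_rotate l 1).symm, mem_rotate] at hp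
  exact hR p hp

theorem exists_cyclic_neighbours_of_nodup_map {R : α → α → Prop} {f : α → β} {l : List α}
    (hR : ∀ p ∈ l.zip (l.rotate 1), R p.1 p.2) (hf : (l.map f).Nodup) (hl : 3 ≤ l.length)
    {x : α} (hx : x ∈ l) :
    ∃ y z, R y x ∧ R x z ∧ f y ≠ f x ∧ f z ≠ f x ∧ f y ≠ f z := by
  obtain ⟨i, hi, rfl⟩ := mem_iff_getElem.1 hx
  -- rotate `l[i]` into position `1`
  have hR' := forall_mem_zip_rotate_one_rotate hR (i + l.length - 1)
  have hf' : ((l.rotate (i + l.length - 1)).map f).Nodup := by rwa [map_rotate, nodup_rotate]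
  have hx' : (l.rotate (i + l.length - 1))[1]'(by simp; omega) = l[i] := by
    simp only [getElem_rotate, show 1 + (i + l.length - 1) = i + l.length by omega,
      Nat.add_mod_right, Nat.mod_eq_of_lt hi]
  obtain ⟨y, x, z, rest, hyxz⟩ :
      ∃ y x z rest, l.rotate (i + l.length - 1) = y :: x :: z :: rest := by
    have hlen := length_rotate l (i + l.length - 1)
    match l.rotate (i + l.length - 1), hlen with
    | y :: x :: z :: rest, _ => exact ⟨y, x, z, rest, rfl⟩
    | [], h | [_], h | [_, _], h => simp at h; omega
  simp only [hyxz] at hR' hf' hx'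
  subst hx'
  simp only [zip, zipWith_rotate_one, mem_cons, forall_eq_or_imp] at hR'
  simp only [map_cons, nodup_cons, mem_cons, not_or] at hf'
  exact ⟨y, z, hR'.1, hR'.2 (l[i], z) (by simp), hf'.1.1, Ne.symm hf'.2.1.1, hf'.1.2.1⟩

end List

namespace DynH

section Trails

variable {V E C : Type} {G : Multigraph V E} {adjH : C → C → Prop} {c : E → C}

theorem length_eq_card_of_nodup_of_forall_mem_edgesOf [Fintype E] [DecidableEq E]
    {L : List (V × V × E)} (hnodup : (edgesOf L).Nodup) (hall : ∀ e, e ∈ edgesOf L) :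
    L.length = Fintype.card E := by
  have huniv : (edgesOf L).toFinset = Finset.univ :=
    Finset.eq_univ_iff_forall.2 fun e => List.mem_toFinset.2 (hall e)
  rw [← Finset.card_univ, ← huniv, List.toFinset_card_of_nodup hnodup, edgesOf, List.length_map]

theorem IsClosedDynHTrail.length_le_two_of_partners_subset {L : List (V × V × E)}
    (hL : IsClosedDynHTrail G adjH c L) {e g : E} (he : e ∈ edgesOf L)
    (hout : ∀ a b, DynStep G adjH c a b → a.2.2 = e → b.2.2 = e ∨ b.2.2 = g)
    (hin : ∀ a b, DynStep G adjH c a b → b.2.2 = e → a.2.2 = e ∨ a.2.2 = g) :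
    L.length ≤ 2 := by
  obtain ⟨-, hnodup, -, hstep⟩ := hL
  by_contra! hlen
  obtain ⟨x, hx, rfl⟩ := List.mem_map.1 he
  obtain ⟨y, z, hyx, hxz, hy, hz, hyz⟩ :=
    List.exists_cyclic_neighbours_of_nodup_map hstep hnodup hlen hx
  have hy' := (hin y x hyx rfl).resolve_left hy
  have hz' := (hout x z hxz rfl).resolve_left hz
  exact hyz (hy'.trans hz'.symm)

end Trails

instance instDecidableParallel {V E : Type} [DecidableEq V] (G : Multigraph V E) (e g : E) :
    Decidable (G.parallel e g) := by
  unfold Multigraph.parallel; infer_instance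

instance instDecidableL2Adj {V E C : Type} [DecidableEq V] [DecidableEq E] (G : Multigraph V E)
    (adjH : C → C → Prop) [DecidableRel adjH] (c : E → C) (p q : L2V G) :
    Decidable (L2Adj G adjH c p q) := by
  unfold L2Adj; infer_instance

instance instDecidableRelL2GraphAdj {V E C : Type} [DecidableEq V] [DecidableEq E] (G : Multigraph V E)
    (adjH : C → C → Prop) [DecidableRel adjH] (c : E → C) :
    DecidableRel (L2Graph G adjH c).Adj := fun p q => by
  change Decidable (L2Adj G adjH c p q ∨ L2Adj G adjH c q p); infer_instance

instance instDecidableDynStep {V E C : Type} [DecidableEq V] [DecidableEq E] (G : Multigraph V E)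
    (adjH : C → C → Prop) [DecidableRel adjH] (c : E → C) (a b : V × V × E) :
    Decidable (DynStep G adjH c a b) := by
  unfold DynStep; infer_instance

/-- Vertices `u = 0`, `v = 1`, `w = 2`; edges `0 = uv`, `1 = uv` (the blue one), `2 = uw`,
`3 = vw`. -/
def exGraph : Multigraph (Fin 3) (Fin 4) where
  fst := ![0, 0, 0, 1]
  snd := ![1, 1, 2, 2]
  loopless := by decide

def exColoring : Fin 4 → Bool := ![false, true, false, false]

abbrev exH : Bool → Bool → Prop := Eq

def exIncidence (x : Fin 3) (e : Fin 4) (h : exGraph.inc x e := by decide) : L2V exGraph :=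
  ⟨(x, e), h⟩

def exHamiltonianCycle :
    (L2Graph exGraph exH exColoring).Walk (exIncidence 1 0) (exIncidence 1 0) :=
  .cons (v := exIncidence 0 1) (by decide) <| .cons (v := exIncidence 1 1) (by decide) <|
  .cons (v := exIncidence 0 0) (by decide) <| .cons (v := exIncidence 0 2) (by decide) <|
  .cons (v := exIncidence 2 2) (by decide) <| .cons (v := exIncidence 2 3) (by decide) <|
  .cons (v := exIncidence 1 3) (by decide) <| .cons (v := exIncidence 1 0) (by decide) .nil

theorem exHamiltonianCycle_isHamiltonianCycle : exHamiltonianCycle.IsHamiltonianCycle where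
  isCircuit :=
    { isTrail := ⟨by decide⟩
      ne_nil := by simp [exHamiltonianCycle] }
  support_nodup := by decide
  isHamiltonian_tail := by unfold SimpleGraph.Walk.IsHamiltonian; decide

theorem exDynStep_out_of_edge_one : ∀ a b : Fin 3 × Fin 3 × Fin 4,
    DynStep exGraph exH exColoring a b → a.2.2 = 1 → b.2.2 = 1 ∨ b.2.2 = 0 := by
  decide

theorem exDynStep_into_edge_one : ∀ a b : Fin 3 × Fin 3 × Fin 4,
    DynStep exGraph exH exColoring a b → b.2.2 = 1 → a.2.2 = 1 ∨ a.2.2 = 0 := by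
  decide

/-- There exists an `H`-colored multigraph `G` such that `L_2^H(G)` is Hamiltonian
but `G` has no closed Euler dynamic `H`-trail. -/
theorem exists_L2_hamiltonian_without_euler_dynHTrail :
    ∃ (V E C : Type) (_ : Fintype V) (_ : Fintype E) (_ : DecidableEq V)
      (_ : DecidableEq E) (G : Multigraph V E) (adjH : C → C → Prop)
      (_ : Symmetric adjH) (c : E → C),
      (L2Graph G adjH c).IsHamiltonian ∧
        ¬ ∃ L : List (V × V × E),
            IsClosedDynHTrail G adjH c L ∧ ∀ e : E, e ∈ edgesOf L := by
  refine ⟨Fin 3, Fin 4, Bool, inferInstance, inferInstance, inferInstance, inferInstance,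
    exGraph, exH, fun _ _ h => h.symm, exColoring,
    fun _ => ⟨_, _, exHamiltonianCycle_isHamiltonianCycle⟩, ?_⟩
  rintro ⟨L, hL, hall⟩
  have hlen : L.length = 4 := length_eq_card_of_nodup_of_forall_mem_edgesOf hL.2.1 hall
  have hshort : L.length ≤ 2 := hL.length_le_two_of_partners_subset (hall 1)
    exDynStep_out_of_edge_one exDynStep_into_edge_one
  omega

end DynH
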